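/- arXiv:2202.01189 — 4 statements merged into one kernel-verified Lean document; each statement's English description precedes it below -/
import Mathlib

section
/- Let k be a field and n ≥ 2, and let A = (a_1,…,a_p) and B = (b_1,…,b_q) be finite lists of vectors in ℕ^n. If rk A = n and rk B = n (i.e., both ⟨A⟩ and ⟨B⟩ are nondegenerate), then for no positive integers k_1, k_2 is C = k_1A ⋈ k_2B; that is, ⟨A⟩ and ⟨B⟩ cannot be glued. -/
open MvPolynomial

/-- The toric ideal `I_A` of a finite list `A` of vectors in `ℕ^n`:
the kernel of the `k`-algebra map `k[x_j : j ∈ σ] → k[t_1,…,t_n]`, `x_j ↦ t^{A j}`. -/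
noncomputable def toricIdeal (k : Type*) [CommRing k] {σ : Type*} {n : ℕ}
    (A : σ → Fin n → ℕ) : Ideal (MvPolynomial σ k) :=
  RingHom.ker (MvPolynomial.aeval (R := k) (fun j => ∏ i, MvPolynomial.X i ^ A j i) :
    MvPolynomial σ k →ₐ[k] MvPolynomial (Fin n) k)

/-- The semigroup ring `k[A] = k[x]/I_A`. -/
abbrev semigroupRing (k : Type*) [CommRing k] {σ : Type*} {n : ℕ}
    (A : σ → Fin n → ℕ) : Type _ :=
  MvPolynomial σ k ⧸ toricIdeal k A

/-- The list `C = k₁A ⊔ k₂B`. -/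
def glueList {n : ℕ} {σ τ : Type*} (k1 k2 : ℕ)
    (A : σ → Fin n → ℕ) (B : τ → Fin n → ℕ) : σ ⊕ τ → Fin n → ℕ :=
  Sum.elim (fun j i => k1 * A j i) (fun j i => k2 * B j i)

/-- The extension `I_A·R` of `I_A ⊆ k[x]` to `R = k[x,y]`. -/
noncomputable def extIdealLeft (k : Type*) [CommRing k] {n : ℕ} {σ : Type*} (τ : Type*)
    (A : σ → Fin n → ℕ) : Ideal (MvPolynomial (σ ⊕ τ) k) :=
  Ideal.map (MvPolynomial.rename (Sum.inl : σ → σ ⊕ τ)) (toricIdeal k A)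

/-- The extension `I_B·R` of `I_B ⊆ k[y]` to `R = k[x,y]`. -/
noncomputable def extIdealRight (k : Type*) [CommRing k] {n : ℕ} (σ : Type*) {τ : Type*}
    (B : τ → Fin n → ℕ) : Ideal (MvPolynomial (σ ⊕ τ) k) :=
  Ideal.map (MvPolynomial.rename (Sum.inr : τ → σ ⊕ τ)) (toricIdeal k B)

/-- `C = k₁A ⋈ k₂B` : `⟨C⟩` is a gluing of `⟨A⟩` and `⟨B⟩`, i.e.
`I_C = I_A·R + I_B·R + ⟨ρ⟩` for a binomial `ρ = x^c - y^d` with `ρ ∉ I_A·R + I_B·R`. -/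
def IsGluing (k : Type*) [CommRing k] {n : ℕ} {σ τ : Type*} [Fintype σ] [Fintype τ]
    (A : σ → Fin n → ℕ) (B : τ → Fin n → ℕ) (k1 k2 : ℕ) : Prop :=
  ∃ (c : σ → ℕ) (d : τ → ℕ),
    ((∏ j, X (Sum.inl j) ^ c j : MvPolynomial (σ ⊕ τ) k) - ∏ j, X (Sum.inr j) ^ d j) ∉
        extIdealLeft k τ A + extIdealRight k σ B ∧
    toricIdeal k (glueList k1 k2 A B) =
      extIdealLeft k τ A + extIdealRight k σ B +
        Ideal.span {((∏ j, X (Sum.inl j) ^ c j : MvPolynomial (σ ⊕ τ) k) -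
          ∏ j, X (Sum.inr j) ^ d j)}

/-- `⟨A⟩` and `⟨B⟩` can be glued. -/
def CanBeGlued (k : Type*) [CommRing k] {n : ℕ} {σ τ : Type*} [Fintype σ] [Fintype τ]
    (A : σ → Fin n → ℕ) (B : τ → Fin n → ℕ) : Prop :=
  ∃ k1 k2 : ℕ, 0 < k1 ∧ 0 < k2 ∧ IsGluing k A B k1 k2

/-- The `ℚ`-span of the columns of `A`. -/
def colSpanQ {n : ℕ} {σ : Type*} (A : σ → Fin n → ℕ) : Submodule ℚ (Fin n → ℚ) :=
  Submodule.span ℚ (Set.range fun j => fun i => (A j i : ℚ))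

/-- `rk A`, the rank over `ℚ` of the matrix whose columns are the vectors of `A`. -/
noncomputable def rkQ {n : ℕ} {σ : Type*} (A : σ → Fin n → ℕ) : ℕ :=
  Module.finrank ℚ (colSpanQ A)

/-- A gluable lattice point of `A` and `B`: a vector `u ∈ ℤ^n` with
`gcd(u_1,…,u_n) = 1` spanning `v(A) ∩ v(B)` over `ℚ`. -/
def IsGluableLatticePoint {n : ℕ} {σ τ : Type*} (A : σ → Fin n → ℕ) (B : τ → Fin n → ℕ)
    (u : Fin n → ℤ) : Prop :=
  Finset.univ.gcd u = 1 ∧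
  Submodule.span ℚ {fun i => ((u i : ℚ))} = colSpanQ A ⊓ colSpanQ B

/-- The additive submonoid of `ℤ^n` generated by the columns of `A`
(the semigroup `⟨A⟩`, viewed inside `ℤ^n`). -/
def intClosure {n : ℕ} {σ : Type*} (A : σ → Fin n → ℕ) : AddSubmonoid (Fin n → ℤ) :=
  AddSubmonoid.closure (Set.range fun j => fun i => (A j i : ℤ))

/-- The semigroup `⟨A⟩ ⊆ ℕ^n` generated by the columns of `A`. -/
def natClosure {n : ℕ} {σ : Type*} (A : σ → Fin n → ℕ) : AddSubmonoid (Fin n → ℕ) :=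
  AddSubmonoid.closure (Set.range A)

/-- The depth of a ring `S` with respect to an ideal `J`: the supremum of the lengths
of regular sequences on `S` consisting of elements of `J`. -/
noncomputable def idealDepth {S : Type*} [CommRing S] (J : Ideal S) : ℕ∞ :=
  sSup {m : ℕ∞ | ∃ rs : List S, (rs.length : ℕ∞) = m ∧ (∀ r ∈ rs, r ∈ J) ∧
    RingTheory.Sequence.IsRegular S rs}

/-- The maximal graded ideal of `k[A]`, generated by the images of the variables. -/
noncomputable def maxGradedIdeal (k : Type*) [CommRing k] {σ : Type*} {n : ℕ}
    (A : σ → Fin n → ℕ) : Ideal (semigroupRing k A) :=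
  Ideal.span (Set.range fun j => Ideal.Quotient.mk (toricIdeal k A) (X j))

/-- The depth of the semigroup ring `k[A]` with respect to its maximal graded ideal. -/
noncomputable def sgrDepth (k : Type*) [CommRing k] {σ : Type*} {n : ℕ}
    (A : σ → Fin n → ℕ) : ℕ∞ :=
  idealDepth (maxGradedIdeal k A)

/-- `k[A]` is Cohen–Macaulay: its depth equals its Krull dimension. -/
def sgrIsCohenMacaulay (k : Type*) [CommRing k] {σ : Type*} {n : ℕ}
    (A : σ → Fin n → ℕ) : Prop :=
  (sgrDepth k A : WithBot ℕ∞) = ringKrullDim (semigroupRing k A)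

open CategoryTheory in
/-- The projective dimension of a module `M` over `R`: the least `m` such that `M` admits a
projective resolution of length `m`. -/
noncomputable def modProjDim (R : Type*) [CommRing R] (M : ModuleCat R) : ℕ∞ :=
  sInf {m : ℕ∞ | ∃ P : ProjectiveResolution M,
    ∀ i : ℕ, m < (i : ℕ∞) → Limits.IsZero (P.complex.X i)}


/-!
Suppose `I_C = I_A·R + I_B·R + (x^c - y^d)` and put `w = Σ cⱼ aⱼ`. The algebra map
`R → k[ℚⁿ ⧸ ℚw]`, `xⱼ ↦ t^[aⱼ]`, `yₗ ↦ 1`, kills `I_A·R` and `I_B·R` (it factors through the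
toric maps of `A` and `B`) and kills `x^c - y^d` (as `[w] = 0`), hence kills `I_C`. A vector `v`
in `v(A) ∩ v(B)` yields, after clearing denominators and splitting signs, a binomial in `I_C`
whose monomials map to `t^[u]` and `t^[u']` with `u - u' = N v`, `N > 0`; so `v ∈ ℚw`. Thus `v(A) ∩ v(B)` has dimension
at most one, whereas for nondegenerate `A` and `B` it is all of `ℚⁿ` with `n ≥ 2`.
-/

open AddMonoidAlgebra

section Monomials

variable {k σ : Type*} [CommSemiring k] [Fintype σ]

theorem aeval_single_prod_X_pow {G : Type*} [AddCommMonoid G] (f : σ → G) (e : σ → ℕ) :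
    aeval (R := k) (fun j => single (f j) (1 : k)) (∏ j, X j ^ e j) =
      single (∑ j, e j • f j) 1 := by
  simp [single_pow]

theorem aeval_prod_X_pow_prod_X_pow {n : ℕ} (A : σ → Fin n → ℕ) (e : σ → ℕ) :
    aeval (R := k) (fun j => ∏ i, X i ^ A j i) (∏ j, X j ^ e j) =
      ∏ i, (X i : MvPolynomial (Fin n) k) ^ (∑ j, e j • A j) i := by
  simp only [map_prod, map_pow, aeval_X, ← Finset.prod_pow, ← pow_mul, Finset.sum_apply]
  rw [Finset.prod_comm]
  simp [Finset.prod_pow_eq_pow_sum, mul_comm]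

end Monomials

section ToricIdeal

variable {k σ : Type*} [CommRing k] {n : ℕ}

theorem prod_X_pow_sub_mem_toricIdeal [Fintype σ] (A : σ → Fin n → ℕ) {e e' : σ → ℕ}
    (h : ∑ j, e j • A j = ∑ j, e' j • A j) :
    ∏ j, X j ^ e j - ∏ j, X j ^ e' j ∈ toricIdeal k A := by
  rw [toricIdeal, RingHom.mem_ker, map_sub, sub_eq_zero, aeval_prod_X_pow_prod_X_pow,
    aeval_prod_X_pow_prod_X_pow, h]

theorem toricIdeal_le_ker_aeval_single {G : Type*} [AddCommMonoid G] (A : σ → Fin n → ℕ)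
    (φ : (Fin n → ℕ) →+ G) :
    toricIdeal k A ≤ RingHom.ker (aeval fun j => single (φ (A j)) (1 : k)) := by
  let χ : MvPolynomial (Fin n) k →ₐ[k] AddMonoidAlgebra k G :=
    aeval fun i => single (φ (Pi.single i 1)) 1
  have hχ : χ.comp (aeval fun j => ∏ i, X i ^ A j i) = aeval fun j => single (φ (A j)) 1 := by
    rw [comp_aeval]
    congr! with j
    rw [aeval_single_prod_X_pow]
    simp_rw [← map_nsmul, ← map_sum]
    rw [show ∑ i, A j i • (Pi.single i 1 : Fin n → ℕ) = A j by ext; simp [Pi.single_apply]]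
  intro f hf
  rw [RingHom.mem_ker, ← hχ, AlgHom.comp_apply, RingHom.mem_ker.mp hf, map_zero]

end ToricIdeal

section Gluing

variable {k σ τ : Type*} {n : ℕ} {A : σ → Fin n → ℕ} {B : τ → Fin n → ℕ} {k1 k2 : ℕ}

theorem glueList_inl (j : σ) : glueList k1 k2 A B (Sum.inl j) = k1 • A j := rfl

theorem glueList_inr (l : τ) : glueList k1 k2 A B (Sum.inr l) = k2 • B l := rfl

noncomputable def gluingIdeal (k : Type*) [CommRing k] [Fintype σ] [Fintype τ]
    (A : σ → Fin n → ℕ) (B : τ → Fin n → ℕ) (c : σ → ℕ) (d : τ → ℕ) :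
    Ideal (MvPolynomial (σ ⊕ τ) k) :=
  extIdealLeft k τ A + extIdealRight k σ B +
    Ideal.span {∏ j, X (Sum.inl j) ^ c j - ∏ l, X (Sum.inr l) ^ d l}

variable [CommRing k] [Fintype σ] [Fintype τ] {c : σ → ℕ} {d : τ → ℕ} {G : Type*}
  [AddCommMonoid G]

theorem toricIdeal_glueList_le_ker_aeval_single
    (hI : toricIdeal k (glueList k1 k2 A B) ≤ gluingIdeal k A B c d)
    (φ₁ φ₂ : (Fin n → ℕ) →+ G) (hφ : φ₁ (∑ j, c j • A j) = φ₂ (∑ l, d l • B l)) :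
    toricIdeal k (glueList k1 k2 A B) ≤ RingHom.ker
      (aeval (Sum.elim (fun j => single (φ₁ (A j)) (1 : k)) fun l => single (φ₂ (B l)) 1)) := by
  refine hI.trans (sup_le (sup_le ?_ ?_) ?_)
  · rw [extIdealLeft, Ideal.map_le_iff_le_comap]
    intro f hf
    rw [Ideal.mem_comap, RingHom.mem_ker, aeval_rename, Sum.elim_comp_inl]
    exact toricIdeal_le_ker_aeval_single A φ₁ hf
  · rw [extIdealRight, Ideal.map_le_iff_le_comap]
    intro f hf
    rw [Ideal.mem_comap, RingHom.mem_ker, aeval_rename, Sum.elim_comp_inr]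
    exact toricIdeal_le_ker_aeval_single B φ₂ hf
  · rw [Ideal.span_le, Set.singleton_subset_iff, SetLike.mem_coe, RingHom.mem_ker, map_sub,
      sub_eq_zero]
    simp only [map_sum, map_nsmul] at hφ
    simp [single_pow, hφ]

theorem map_sum_add_map_sum_eq_of_toricIdeal_glueList_le [Nontrivial k]
    (hI : toricIdeal k (glueList k1 k2 A B) ≤ gluingIdeal k A B c d)
    (φ₁ φ₂ : (Fin n → ℕ) →+ G) (hφ : φ₁ (∑ j, c j • A j) = φ₂ (∑ l, d l • B l))
    {α α' : σ → ℕ} {β β' : τ → ℕ}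
    (h : k1 • ∑ j, α j • A j + k2 • ∑ l, β l • B l =
      k1 • ∑ j, α' j • A j + k2 • ∑ l, β' l • B l) :
    φ₁ (∑ j, α j • A j) + φ₂ (∑ l, β l • B l) = φ₁ (∑ j, α' j • A j) + φ₂ (∑ l, β' l • B l) := by
  have hdeg (a : σ → ℕ) (b : τ → ℕ) : ∑ j, Sum.elim a b j • glueList k1 k2 A B j =
      k1 • ∑ j, a j • A j + k2 • ∑ l, b l • B l := by
    simp only [Fintype.sum_sum_type, Sum.elim_inl, Sum.elim_inr, glueList_inl, glueList_inr,
      smul_comm _ k1, smul_comm _ k2, ← Finset.smul_sum]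
  have hmem := toricIdeal_glueList_le_ker_aeval_single hI φ₁ φ₂ hφ
    (prod_X_pow_sub_mem_toricIdeal _ (e := Sum.elim α β) (e' := Sum.elim α' β')
      (by rw [hdeg, hdeg, h]))
  rw [RingHom.mem_ker, map_sub, sub_eq_zero] at hmem
  simp only [map_sum, map_nsmul]
  simpa [Fintype.prod_sum_type, single_pow, single_left_inj] using hmem

end Gluing

theorem exists_nat_mul_eq_int {σ : Type*} [Fintype σ] (r : σ → ℚ) :
    ∃ D : ℕ, 0 < D ∧ ∀ j, ∃ z : ℤ, (D : ℚ) * r j = z := by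
  refine ⟨∏ j, (r j).den, Finset.prod_pos fun j _ => (r j).pos, fun j => ?_⟩
  obtain ⟨m, hm⟩ := Finset.dvd_prod_of_mem (fun j => (r j).den) (Finset.mem_univ j)
  exact ⟨m * (r j).num, by rw [hm]; push_cast; rw [← Rat.den_mul_eq_num]; ring⟩

theorem exists_nat_smul_eq_sub_of_mem_span {σ V : Type*} [Fintype σ] [AddCommGroup V]
    [Module ℚ V] {f : σ → V} {v : V} (hv : v ∈ Submodule.span ℚ (Set.range f)) :
    ∃ D : ℕ, 0 < D ∧ ∃ a a' : σ → ℕ, (D : ℚ) • v = ∑ j, a j • f j - ∑ j, a' j • f j := by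
  obtain ⟨r, rfl⟩ := Submodule.mem_span_range_iff_exists_fun ℚ |>.mp hv
  obtain ⟨D, hD, hz⟩ := exists_nat_mul_eq_int r
  choose z hz using hz
  refine ⟨D, hD, fun j => (z j).toNat, fun j => (-z j).toNat, ?_⟩
  rw [← Finset.sum_sub_distrib, Finset.smul_sum]
  refine Finset.sum_congr rfl fun j _ => ?_
  rw [smul_smul, hz, ← Nat.cast_smul_eq_nsmul ℚ, ← Nat.cast_smul_eq_nsmul ℚ, ← sub_smul]
  congr 1
  exact_mod_cast (Int.toNat_sub_toNat_neg (z j)).symm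

theorem colSpanQ_inf_colSpanQ_le_span_singleton {k σ τ : Type*} [CommRing k] [Nontrivial k]
    [Fintype σ] [Fintype τ] {n : ℕ} {A : σ → Fin n → ℕ} {B : τ → Fin n → ℕ} {k1 k2 : ℕ}
    {c : σ → ℕ} {d : τ → ℕ} (hk2 : 0 < k2)
    (hI : toricIdeal k (glueList k1 k2 A B) ≤ gluingIdeal k A B c d) :
    colSpanQ A ⊓ colSpanQ B ≤ ℚ ∙ fun i => ((∑ j, c j • A j) i : ℚ) := by
  rintro v ⟨hvA, hvB⟩
  obtain ⟨D, hD, a, a', ha⟩ := exists_nat_smul_eq_sub_of_mem_span hvA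
  obtain ⟨E, hE, b, b', hb⟩ := exists_nat_smul_eq_sub_of_mem_span hvB
  set W := ℚ ∙ fun i => ((∑ j, c j • A j) i : ℚ)
  let ι : (Fin n → ℕ) →+ (Fin n → ℚ) := (Nat.castAddMonoidHom ℚ).compLeft (Fin n)
  have hι : Function.Injective ι := Nat.cast_injective.comp_left
  have hι_apply (x : Fin n → ℕ) : ι x = fun i => (x i : ℚ) := rfl
  have key := map_sum_add_map_sum_eq_of_toricIdeal_glueList_le (G := (Fin n → ℚ) ⧸ W) hI
    (W.mkQ.toAddMonoidHom.comp ι) 0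
    (by
      simp only [AddMonoidHom.zero_apply, AddMonoidHom.comp_apply, LinearMap.toAddMonoidHom_coe,
        Submodule.mkQ_apply, Submodule.Quotient.mk_eq_zero]
      exact Submodule.mem_span_singleton_self _)
    (α := fun j => k2 * E * a j) (α' := fun j => k2 * E * a' j)
    (β := fun l => k1 * D * b' l) (β' := fun l => k1 * D * b l)
    (by
      apply hι
      simp only [map_add, map_nsmul, map_sum, mul_smul, ← Finset.smul_sum]
      simp only [hι_apply]
      linear_combination (norm := module) (-(k1 * k2 * E : ℚ)) • ha + (k1 * k2 * D : ℚ) • hb)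
  simp only [AddMonoidHom.zero_apply, add_zero, AddMonoidHom.comp_apply,
    LinearMap.toAddMonoidHom_coe, Submodule.mkQ_apply, Submodule.Quotient.eq] at key
  have hkey : ι (∑ j, (k2 * E * a j) • A j) - ι (∑ j, (k2 * E * a' j) • A j) =
      ((k2 * E * D : ℕ) : ℚ) • v := by
    simp only [map_sum, map_nsmul, mul_smul, ← Finset.smul_sum]
    simp only [hι_apply]
    linear_combination (norm := module) (-(k2 * E : ℚ)) • ha
  rwa [hkey, Submodule.smul_mem_iff _ (by positivity)] at key

theorem colSpanQ_eq_top_of_rkQ_eq {n : ℕ} {σ : Type*} {A : σ → Fin n → ℕ} (hA : rkQ A = n) :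
    colSpanQ A = ⊤ :=
  Submodule.eq_top_of_finrank_eq (by rw [Module.finrank_fin_fun]; exact hA)

/-- If `n ≥ 2` and both `⟨A⟩` and `⟨B⟩` are nondegenerate
(`rk A = rk B = n`), then `⟨A⟩` and `⟨B⟩` cannot be glued. -/
theorem not_canBeGlued_of_nondegenerate (k : Type*) [Field k] {n p q : ℕ} (hn : 2 ≤ n)
    (A : Fin p → Fin n → ℕ) (B : Fin q → Fin n → ℕ)
    (hA : rkQ A = n) (hB : rkQ B = n) :
    ¬ CanBeGlued k A B := by
  rintro ⟨k1, k2, -, hk2, c, d, -, hI⟩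
  have hle := colSpanQ_inf_colSpanQ_le_span_singleton hk2 hI.le
  rw [colSpanQ_eq_top_of_rkQ_eq hA, colSpanQ_eq_top_of_rkQ_eq hB, inf_top_eq] at hle
  have hrank := (Submodule.finrank_mono hle).trans (finrank_span_le_card _)
  simp only [finrank_top, Module.finrank_fin_fun, Set.toFinset_singleton,
    Finset.card_singleton] at hrank
  omega
end

section
/- Let k be a field, n ≥ 1, and let A = (a_1,…,a_p), B = (b_1,…,b_q) be finite lists of vectors in ℕ^n satisfying rk(A|B) = n and rk A + rk B = n + 1, and let u ∈ ℤ^n be a gluable lattice point of A and B. Let k_1, k_2 be relatively prime positive integers and C = k_1A ⊔ k_2B. For α ∈ ℤ^p and β ∈ ℤ^q, consider the binomial w = (∏_{j : α_j > 0} x_j^{α_j})(∏_{j : β_j < 0} y_j^{−β_j}) − (∏_{j : α_j < 0} x_j^{−α_j})(∏_{j : β_j > 0} y_j^{β_j}) in R = k[x_1,…,x_p,y_1,…,y_q]. Then w ∈ I_C if and only if there exists an integer ℓ such that ∑_{j=1}^q β_j b_j = k_1 ℓ u and ∑_{j=1}^p α_j a_j = k_2 ℓ u. -/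
open MvPolynomial

/-!
A binomial `x^{γ⁺} - x^{γ⁻}` lies in a toric ideal `I_M` exactly when `∑ γ_j M_j = 0`, since
the toric map sends monomials to monomials. For `C = k₁A ⊔ k₂B` and `γ = (α, -β)` this is
`k₁ ∑ α_j a_j = k₂ ∑ β_j b_j`. The common value lies in `v(A) ∩ v(B) = ℚu`, and as `u` is
primitive it is an integer multiple `m u`; coprimality of `k₁` and `k₂` then forces `k₂ ∣ m`,
and `ℓ = m / k₂`.
-/

open Finset

section Monomials

variable {R ι : Type*} [CommSemiring R] [Fintype ι]

theorem prod_X_pow_eq_monomial_equivFunOnFinite (m : ι → ℕ) :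
    (∏ i, X i ^ m i : MvPolynomial ι R) = monomial (Finsupp.equivFunOnFinite.symm m) 1 := by
  rw [monomial_eq, C_1, one_mul, Finsupp.prod_fintype _ _ fun _ => pow_zero _]
  rfl

theorem prod_X_pow_injective [Nontrivial R] :
    Function.Injective fun m : ι → ℕ => (∏ i, X i ^ m i : MvPolynomial ι R) := by
  intro m m' h
  simp only [prod_X_pow_eq_monomial_equivFunOnFinite] at h
  exact Finsupp.equivFunOnFinite.symm.injective (monomial_left_injective one_ne_zero h)

end Monomials

section ToricIdeal

variable (k : Type*) [CommRing k] {σ : Type*} [Fintype σ] {n : ℕ}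

theorem aeval_toric_prod_X_pow (M : σ → Fin n → ℕ) (e : σ → ℕ) :
    aeval (fun j => ∏ i, (X i : MvPolynomial (Fin n) k) ^ M j i)
        (∏ j, X j ^ e j : MvPolynomial σ k) = ∏ i, X i ^ ∑ j, e j * M j i := by
  simp only [map_prod, map_pow, aeval_X, ← prod_pow, ← pow_mul]
  rw [prod_comm]
  refine prod_congr rfl fun i _ => ?_
  simp only [prod_pow_eq_pow_sum, mul_comm]

theorem prod_X_pow_sub_prod_X_pow_mem_toricIdeal_iff [Nontrivial k] (M : σ → Fin n → ℕ)
    (e f : σ → ℕ) :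
    (∏ j, X j ^ e j - ∏ j, X j ^ f j : MvPolynomial σ k) ∈ toricIdeal k M ↔
      ∀ i, ∑ j, e j * M j i = ∑ j, f j * M j i := by
  rw [toricIdeal, RingHom.mem_ker, map_sub, sub_eq_zero,
    aeval_toric_prod_X_pow, aeval_toric_prod_X_pow, (prod_X_pow_injective (R := k)).eq_iff,
    funext_iff]

theorem prod_X_pow_toNat_sub_mem_toricIdeal_iff [Nontrivial k] (M : σ → Fin n → ℕ)
    (γ : σ → ℤ) :
    (∏ j, X j ^ (γ j).toNat - ∏ j, X j ^ (-γ j).toNat : MvPolynomial σ k) ∈ toricIdeal k M ↔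
      ∀ i, ∑ j, γ j * M j i = 0 := by
  rw [prod_X_pow_sub_prod_X_pow_mem_toricIdeal_iff]
  refine forall_congr' fun i => ?_
  rw [← Nat.cast_inj (R := ℤ), ← sub_eq_zero]
  push_cast
  simp only [← sum_sub_distrib, ← sub_mul, Int.toNat_sub_toNat_neg]

end ToricIdeal

theorem sum_mul_glueList {n : ℕ} {σ τ : Type*} [Fintype σ] [Fintype τ] (k1 k2 : ℕ)
    (A : σ → Fin n → ℕ) (B : τ → Fin n → ℕ) (α : σ → ℤ) (β : τ → ℤ) (i : Fin n) :
    ∑ j, Sum.elim α (-β) j * (glueList k1 k2 A B j i : ℤ) =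
      k1 * ∑ j, α j * A j i - k2 * ∑ j, β j * B j i := by
  simp only [Fintype.sum_sum_type, glueList, Sum.elim_inl, Sum.elim_inr, Pi.neg_apply, mul_sum]
  push_cast
  rw [sub_eq_add_neg, ← sum_neg_distrib]
  congr 1 <;> refine sum_congr rfl fun j _ => ?_ <;> ring

theorem intCast_sum_mul_mem_colSpanQ {n : ℕ} {σ : Type*} [Fintype σ] (A : σ → Fin n → ℕ)
    (c : σ → ℤ) : (fun i => ((∑ j, c j * A j i : ℤ) : ℚ)) ∈ colSpanQ A := by
  have hsum : (fun i => ((∑ j, c j * A j i : ℤ) : ℚ)) =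
      ∑ j, (c j : ℚ) • fun i => (A j i : ℚ) := by
    ext i
    simp
  rw [hsum]
  exact Submodule.sum_mem _ fun j _ => Submodule.smul_mem _ _ (Submodule.subset_span ⟨j, rfl⟩)

theorem intCast_sum_mul_mem_colSpanQ_inf {n : ℕ} {σ τ : Type*} [Fintype σ] [Fintype τ]
    (A : σ → Fin n → ℕ) (B : τ → Fin n → ℕ) {k1 k2 : ℕ} (hk1 : 0 < k1) (α : σ → ℤ) (β : τ → ℤ)
    (h : ∀ i, (k1 : ℤ) * ∑ j, α j * A j i = k2 * ∑ j, β j * B j i) :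
    (fun i => ((∑ j, α j * A j i : ℤ) : ℚ)) ∈ colSpanQ A ⊓ colSpanQ B := by
  refine ⟨intCast_sum_mul_mem_colSpanQ A α, ?_⟩
  have hscale : (fun i => ((∑ j, α j * A j i : ℤ) : ℚ)) =
      ((k2 : ℚ) / k1) • fun i => ((∑ j, β j * B j i : ℤ) : ℚ) := by
    ext i
    have hi : (k1 : ℚ) * ((∑ j, α j * A j i : ℤ) : ℚ) = k2 * ((∑ j, β j * B j i : ℤ) : ℚ) := by
      exact_mod_cast h i
    rw [Pi.smul_apply, smul_eq_mul, div_mul_eq_mul_div, eq_div_iff (by positivity), ← hi]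
    ring
  rw [hscale]
  exact Submodule.smul_mem _ _ (intCast_sum_mul_mem_colSpanQ B β)

section PrimitiveVector

variable {ι : Type*} [Fintype ι] {u : ι → ℤ}

theorem dvd_of_forall_dvd_mul_of_gcd_eq_one (hu : univ.gcd u = 1) {c m : ℤ}
    (h : ∀ i, c ∣ m * u i) : c ∣ m := by
  have hgcd := dvd_gcd (s := univ) fun i _ => h i
  rw [Finset.gcd_mul_left, hu, mul_one] at hgcd
  exact dvd_normalize_iff.mp hgcd

theorem exists_eq_int_mul_of_mem_span_rat (hu : univ.gcd u = 1) {v : ι → ℤ}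
    (hv : (fun i => (v i : ℚ)) ∈ Submodule.span ℚ {fun i => (u i : ℚ)}) :
    ∃ m : ℤ, ∀ i, v i = m * u i := by
  obtain ⟨r, hr⟩ := Submodule.mem_span_singleton.mp hv
  have hden : ∀ i, (r.den : ℤ) * v i = r.num * u i := by
    intro i
    have hi : r * u i = v i := congrFun hr i
    qify
    rw [← hi, ← Rat.mul_den_eq_num]
    ring
  have hdvd : (r.den : ℤ) ∣ r.num :=
    dvd_of_forall_dvd_mul_of_gcd_eq_one hu fun i => ⟨v i, (hden i).symm⟩
  have hden_one : r.den = 1 :=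
    Nat.Coprime.eq_one_of_dvd r.reduced.symm (Int.natCast_dvd.mp hdvd)
  exact ⟨r.num, fun i => by simpa [hden_one] using hden i⟩

theorem exists_level_of_mul_eq_mul {k1 k2 : ℕ} (hk2 : 0 < k2) (hcop : Nat.Coprime k1 k2)
    (hu : univ.gcd u = 1) {v w : ι → ℤ} {m : ℤ} (hv : ∀ i, v i = m * u i)
    (h : ∀ i, (k1 : ℤ) * v i = k2 * w i) :
    ∃ l : ℤ, (∀ i, w i = k1 * l * u i) ∧ ∀ i, v i = k2 * l * u i := by
  have hk2m : (k2 : ℤ) ∣ m := by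
    refine dvd_of_forall_dvd_mul_of_gcd_eq_one hu fun i => ?_
    refine Int.dvd_of_dvd_mul_right_of_gcd_one ⟨w i, ?_⟩
      ((Int.gcd_natCast_natCast k2 k1).trans hcop.symm)
    rw [← hv, h]
  obtain ⟨l, rfl⟩ := hk2m
  refine ⟨l, fun i => mul_left_cancel₀ (by positivity : (k2 : ℤ) ≠ 0) ?_, hv⟩
  rw [← h, hv]
  ring

end PrimitiveVector

theorem binomial_mem_toricIdeal_iff_general (k : Type*) [Field k] {n p q : ℕ}
    (A : Fin p → Fin n → ℕ) (B : Fin q → Fin n → ℕ)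
    (u : Fin n → ℤ) (hu : IsGluableLatticePoint A B u)
    (k1 k2 : ℕ) (hk1 : 0 < k1) (hk2 : 0 < k2) (hcop : Nat.Coprime k1 k2)
    (α : Fin p → ℤ) (β : Fin q → ℤ) :
    (((∏ j, X (Sum.inl j) ^ (α j).toNat) * (∏ j, X (Sum.inr j) ^ (-β j).toNat) -
        (∏ j, X (Sum.inl j) ^ (-α j).toNat) * (∏ j, X (Sum.inr j) ^ (β j).toNat) :
        MvPolynomial (Fin p ⊕ Fin q) k) ∈ toricIdeal k (glueList k1 k2 A B)) ↔
      ∃ l : ℤ, (∀ i, ∑ j, β j * (B j i : ℤ) = (k1 : ℤ) * l * u i) ∧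
        (∀ i, ∑ j, α j * (A j i : ℤ) = (k2 : ℤ) * l * u i) := by
  have hbinomial :=
    prod_X_pow_toNat_sub_mem_toricIdeal_iff k (glueList k1 k2 A B) (Sum.elim α (-β))
  simp only [Fintype.prod_sum_type, Sum.elim_inl, Sum.elim_inr, Pi.neg_apply, neg_neg,
    sum_mul_glueList, sub_eq_zero] at hbinomial
  rw [hbinomial]
  constructor
  · intro h
    obtain ⟨m, hm⟩ := exists_eq_int_mul_of_mem_span_rat hu.1
      (hu.2 ▸ intCast_sum_mul_mem_colSpanQ_inf A B hk1 α β h)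
    exact exists_level_of_mul_eq_mul hk2 hcop hu.1 hm h
  · rintro ⟨l, hB, hA⟩ i
    rw [hA, hB]
    ring

/-- Characterization of the binomials of `I_C` for `C = k₁A ⊔ k₂B` with
`gcd(k₁,k₂) = 1`, in terms of the gluable lattice point `u` and a level `ℓ`. -/
theorem binomial_mem_toricIdeal_iff (k : Type*) [Field k] {n p q : ℕ} (hn : 1 ≤ n)
    (A : Fin p → Fin n → ℕ) (B : Fin q → Fin n → ℕ)
    (hAB : rkQ (Sum.elim A B) = n) (hrk : rkQ A + rkQ B = n + 1)
    (u : Fin n → ℤ) (hu : IsGluableLatticePoint A B u)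
    (k1 k2 : ℕ) (hk1 : 0 < k1) (hk2 : 0 < k2) (hcop : Nat.Coprime k1 k2)
    (α : Fin p → ℤ) (β : Fin q → ℤ) :
    (((∏ j, X (Sum.inl j) ^ (α j).toNat) * (∏ j, X (Sum.inr j) ^ (-β j).toNat) -
        (∏ j, X (Sum.inl j) ^ (-α j).toNat) * (∏ j, X (Sum.inr j) ^ (β j).toNat) :
        MvPolynomial (Fin p ⊕ Fin q) k) ∈ toricIdeal k (glueList k1 k2 A B)) ↔
      ∃ l : ℤ, (∀ i, ∑ j, β j * (B j i : ℤ) = (k1 : ℤ) * l * u i) ∧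
        (∀ i, ∑ j, α j * (A j i : ℤ) = (k2 : ℤ) * l * u i) :=
  binomial_mem_toricIdeal_iff_general k A B u hu k1 k2 hk1 hk2 hcop α β
end

section
/- Let k be a field, n ≥ 1, and let A = (a_1,…,a_p) and B = (b_1,…,b_q) be finite lists of vectors in ℕ^n satisfying rk(A|B) = n and rk A + rk B = n + 1. If ⟨A⟩ and ⟨B⟩ can be glued, then the system A·X = B·Y has a nontrivial solution (X,Y) with X ∈ ℕ^p and Y ∈ ℕ^q, i.e., there exist X ∈ ℕ^p, Y ∈ ℕ^q, not both zero, with ∑_{j=1}^p X_j a_j = ∑_{j=1}^q Y_j b_j. -/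
open MvPolynomial

lemma prodXpow_eq_monomial (k : Type*) [CommRing k] {n : ℕ} (e : Fin n → ℕ) :
    (∏ i, (X i : MvPolynomial (Fin n) k) ^ e i) =
      monomial (Finsupp.equivFunOnFinite.symm e) 1 := by
  rw [← MvPolynomial.prod_X_pow_eq_monomial]
  exact (Finset.prod_subset (Finset.subset_univ _) (fun x _ hx => by
    simp only [Finsupp.mem_support_iff, ne_eq, not_not] at hx
    rw [show e x = 0 from hx, pow_zero])).symm

/-- Under the rank conditions, if `⟨A⟩` and `⟨B⟩` can be glued, then
the system `A·X = B·Y` has a nontrivial solution with `X ∈ ℕ^p`, `Y ∈ ℕ^q`. -/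
theorem canBeGlued_system_solution (k : Type*) [Field k] {n p q : ℕ} (hn : 1 ≤ n)
    (A : Fin p → Fin n → ℕ) (B : Fin q → Fin n → ℕ)
    (hAB : rkQ (Sum.elim A B) = n) (hrk : rkQ A + rkQ B = n + 1)
    (h : CanBeGlued k A B) :
    ∃ (x : Fin p → ℕ) (y : Fin q → ℕ), ¬(x = 0 ∧ y = 0) ∧
      ∀ i, ∑ j, x j * A j i = ∑ j, y j * B j i := by
  obtain ⟨k1, k2, hk1, hk2, c, d, hρ, hC⟩ := h
  have hmem : ((∏ j, X (Sum.inl j) ^ c j : MvPolynomial (Fin p ⊕ Fin q) k) -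
      ∏ j, X (Sum.inr j) ^ d j) ∈ toricIdeal k (glueList k1 k2 A B) := by
    rw [hC, Submodule.add_eq_sup]
    exact Submodule.mem_sup_right (Ideal.subset_span rfl)
  have haev : (aeval (R := k)
      (fun j => ∏ i, (X i : MvPolynomial (Fin n) k) ^ glueList k1 k2 A B j i))
      ((∏ j, X (Sum.inl j) ^ c j : MvPolynomial (Fin p ⊕ Fin q) k) -
        ∏ j, X (Sum.inr j) ^ d j) = 0 := hmem
  rw [map_sub, sub_eq_zero, map_prod, map_prod] at haev
  simp only [map_pow, aeval_X] at haev
  have key : ∀ i, ∑ j, c j * (k1 * A j i) = ∑ j, d j * (k2 * B j i) := by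
    have h1 : (∏ j, (∏ i, (X i : MvPolynomial (Fin n) k) ^ glueList k1 k2 A B (Sum.inl j) i) ^ c j)
        = ∏ i, (X i : MvPolynomial (Fin n) k) ^ ∑ j, c j * (k1 * A j i) := by
      simp only [glueList, Sum.elim_inl]
      refine (Finset.prod_congr rfl fun j _ => ?_).trans
        (Finset.prod_comm.trans (Finset.prod_congr rfl fun i _ =>
          Finset.prod_pow_eq_pow_sum _ _ _))
      rw [← Finset.prod_pow]
      exact Finset.prod_congr rfl fun i _ => by rw [← pow_mul, mul_comm]
    have h2 : (∏ j, (∏ i, (X i : MvPolynomial (Fin n) k) ^ glueList k1 k2 A B (Sum.inr j) i) ^ d j)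
        = ∏ i, (X i : MvPolynomial (Fin n) k) ^ ∑ j, d j * (k2 * B j i) := by
      simp only [glueList, Sum.elim_inr]
      refine (Finset.prod_congr rfl fun j _ => ?_).trans
        (Finset.prod_comm.trans (Finset.prod_congr rfl fun i _ =>
          Finset.prod_pow_eq_pow_sum _ _ _))
      rw [← Finset.prod_pow]
      exact Finset.prod_congr rfl fun i _ => by rw [← pow_mul, mul_comm]
    rw [h1, h2, prodXpow_eq_monomial, prodXpow_eq_monomial] at haev
    have := MvPolynomial.monomial_left_injective (one_ne_zero (α := k)) haev
    have := Finsupp.equivFunOnFinite.symm.injective this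
    exact fun i => congrFun this i
  refine ⟨fun j => k1 * c j, fun j => k2 * d j, ?_, ?_⟩
  · rintro ⟨hx, hy⟩
    apply hρ
    have hc : ∀ j, c j = 0 := fun j => by
      have := congrFun hx j
      simp only [Pi.zero_apply] at this
      exact (Nat.mul_eq_zero.mp this).resolve_left hk1.ne'
    have hd : ∀ j, d j = 0 := fun j => by
      have := congrFun hy j
      simp only [Pi.zero_apply] at this
      exact (Nat.mul_eq_zero.mp this).resolve_left hk2.ne'
    have : ((∏ j, X (Sum.inl j) ^ c j : MvPolynomial (Fin p ⊕ Fin q) k) -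
        ∏ j, X (Sum.inr j) ^ d j) = 0 := by
      simp [hc, hd]
    rw [this]
    exact zero_mem _
  · intro i
    have := key i
    calc ∑ j, k1 * c j * A j i = ∑ j, c j * (k1 * A j i) := by
          refine Finset.sum_congr rfl fun j _ => by ring
      _ = ∑ j, d j * (k2 * B j i) := this
      _ = ∑ j, k2 * d j * B j i := by
          refine Finset.sum_congr rfl fun j _ => by ring
end

section
/- Let k be a field, n ≥ 1, and let A = (a_1,…,a_p) and B = (b_1,…,b_q) be finite lists of vectors in ℕ^n such that rk(A|B) = rk A + rk B (equivalently, the ℚ-spans of the columns of A and of B intersect only in 0). Then for all positive integers k_1, k_2, the toric ideal of C = k_1A ⊔ k_2B splits: I_C = I_A·R + I_B·R. -/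
open MvPolynomial

/-! The toric ideal of a monomial map is spanned by the binomials `x^m - x^m'` with `m`, `m'` of
the same degree. For `C = k₁A ⊔ k₂B` the degree of `x^a y^b` is `k₁ (A a) + k₂ (B b)`, and
because the `ℚ`-spans of the columns of `A` and `B` meet only in `0` (which is what the rank
condition says), equal degrees force `A a = A a'` and `B b = B b'`. Then
`x^a y^b - x^a' y^b' = y^b (x^a - x^a') + x^a' (y^b - y^b')` lies in `I_A·R + I_B·R`. Conversely,
a binomial of `I_A`, read in `R`, has both degrees multiplied by `k₁`, so it lies in `I_C`. -/

open Finsupp (linearCombination)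

section MonomialMap

variable {k : Type*} [CommRing k] {σ τ : Type*}

theorem aeval_monomial_monomial (d : σ → τ →₀ ℕ) (m : σ →₀ ℕ) (c : k) :
    aeval (fun j => monomial (d j) (1 : k)) (monomial m c) =
      monomial (linearCombination ℕ d m) c := by
  rw [aeval_monomial, Finsupp.linearCombination_apply, algebraMap_eq, C_mul',
    Finsupp.prod, Finsupp.sum]
  simp_rw [monomial_pow, one_pow]
  rw [← monomial_sum_one, smul_monomial, smul_eq_mul, mul_one]

theorem binomial_mem_ker_aeval_monomial (d : σ → τ →₀ ℕ) {m m' : σ →₀ ℕ}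
    (h : linearCombination ℕ d m = linearCombination ℕ d m') :
    monomial m (1 : k) - monomial m' 1 ∈
      RingHom.ker (aeval (fun j => monomial (d j) (1 : k)) : MvPolynomial σ k →ₐ[k] _) := by
  rw [RingHom.mem_ker, map_sub, aeval_monomial_monomial,
    aeval_monomial_monomial, h, sub_self]

theorem ker_aeval_monomial_le_of_binomial_mem (d : σ → τ →₀ ℕ) {J : Ideal (MvPolynomial σ k)}
    (hJ : ∀ m m' : σ →₀ ℕ, linearCombination ℕ d m = linearCombination ℕ d m' →
      monomial m (1 : k) - monomial m' 1 ∈ J) :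
    RingHom.ker (aeval (fun j => monomial (d j) (1 : k)) : MvPolynomial σ k →ₐ[k] _) ≤ J := by
  set φ := (aeval (fun j => monomial (d j) (1 : k)) : MvPolynomial σ k →ₐ[k] _)
  set deg := linearCombination ℕ d
  -- `ψ` sends `t^w` to `x^{r w}` for a chosen `r w` of degree `w`; then `f ↦ f - ψ (φ f)` sends
  -- monomials to binomials of equal degree and fixes the kernel of `φ`.
  let r := Function.invFun deg
  let ψ : MvPolynomial τ k →ₗ[k] MvPolynomial σ k :=
    (basisMonomials τ k).constr k fun w => monomial (r w) 1
  have hψ (m : σ →₀ ℕ) (c : k) : ψ (φ (monomial m c)) = monomial (r (deg m)) c := by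
    have hc (w : τ →₀ ℕ) : monomial w c = c • basisMonomials τ k w := by
      rw [coe_basisMonomials, smul_monomial, smul_eq_mul, mul_one]
    rw [aeval_monomial_monomial, hc, map_smul, Module.Basis.constr_basis, smul_monomial,
      smul_eq_mul, mul_one]
  have hsub (f : MvPolynomial σ k) : f - ψ (φ f) ∈ J := by
    induction f using MvPolynomial.induction_on' with
    | monomial m c =>
      rw [hψ, ← mul_one c, ← smul_eq_mul, ← smul_monomial, ← smul_monomial, ← smul_sub]
      exact Submodule.smul_of_tower_mem J c (hJ _ _ (Function.invFun_eq ⟨m, rfl⟩).symm)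
    | add f g hf hg =>
      rw [map_add, map_add, add_sub_add_comm]
      exact J.add_mem hf hg
  intro f hf
  simpa [RingHom.mem_ker.mp hf] using hsub f

end MonomialMap

section Toric

variable {k : Type*} [CommRing k] {n : ℕ} {σ : Type*}

theorem linearCombination_equivFunOnFinite_symm {ι : Type*} (D : σ → ι → ℕ) [Finite ι]
    (m : σ →₀ ℕ) :
    linearCombination ℕ (fun j => Finsupp.equivFunOnFinite.symm (D j)) m =
      Finsupp.equivFunOnFinite.symm (linearCombination ℕ D m) :=
  (Finsupp.apply_linearCombination ℕ (Finsupp.linearEquivFunOnFinite ℕ ℕ ι).symm.toLinearMap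
    D m).symm

theorem toricIdeal_eq_ker (D : σ → Fin n → ℕ) :
    toricIdeal k D = RingHom.ker (aeval fun j =>
      monomial (Finsupp.equivFunOnFinite.symm (D j)) (1 : k) : MvPolynomial σ k →ₐ[k] _) := by
  simp only [toricIdeal, monomial_eq, C_1, one_mul,
    Finsupp.prod_fintype _ _ (fun _ => pow_zero _), Finsupp.coe_equivFunOnFinite_symm]

theorem binomial_mem_toricIdeal (D : σ → Fin n → ℕ) {m m' : σ →₀ ℕ}
    (h : linearCombination ℕ D m = linearCombination ℕ D m') :
    monomial m (1 : k) - monomial m' 1 ∈ toricIdeal k D := by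
  rw [toricIdeal_eq_ker]
  apply binomial_mem_ker_aeval_monomial
  rw [linearCombination_equivFunOnFinite_symm, linearCombination_equivFunOnFinite_symm, h]

theorem toricIdeal_le_of_binomial_mem (D : σ → Fin n → ℕ) {J : Ideal (MvPolynomial σ k)}
    (hJ : ∀ m m' : σ →₀ ℕ, linearCombination ℕ D m = linearCombination ℕ D m' →
      monomial m (1 : k) - monomial m' 1 ∈ J) :
    toricIdeal k D ≤ J := by
  rw [toricIdeal_eq_ker]
  refine ker_aeval_monomial_le_of_binomial_mem _ fun m m' h => hJ m m' ?_
  rwa [linearCombination_equivFunOnFinite_symm, linearCombination_equivFunOnFinite_symm,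
    Equiv.apply_eq_iff_eq] at h

theorem linearCombination_nsmul {M : Type*} [AddCommMonoid M] (v : σ → M) (c : ℕ)
    (m : σ →₀ ℕ) :
    linearCombination ℕ (c • v) m = c • linearCombination ℕ v m := by
  simp [Finsupp.linearCombination_apply, Finsupp.smul_sum, smul_comm c]

theorem toricIdeal_le_comap_rename {σ' : Type*} {D : σ → Fin n → ℕ} {D' : σ' → Fin n → ℕ}
    (ι : σ → σ') (c : ℕ) (h : D' ∘ ι = c • D) :
    toricIdeal k D ≤ (toricIdeal k D').comap (rename ι) :=
  toricIdeal_le_of_binomial_mem D fun m m' hm => by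
    rw [Ideal.mem_comap, map_sub, rename_monomial, rename_monomial]
    apply binomial_mem_toricIdeal
    rw [Finsupp.linearCombination_mapDomain, Finsupp.linearCombination_mapDomain, h,
      linearCombination_nsmul, linearCombination_nsmul, hm]

end Toric

theorem eq_and_eq_of_smul_add_smul_eq {K V : Type*} [Field K] [AddCommGroup V] [Module K V]
    {P Q : Submodule K V} (hPQ : Disjoint P Q) {c₁ c₂ : K} (hc₁ : c₁ ≠ 0) (hc₂ : c₂ ≠ 0)
    {a a' b b' : V} (ha : a ∈ P) (ha' : a' ∈ P) (hb : b ∈ Q) (hb' : b' ∈ Q)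
    (h : c₁ • a + c₂ • b = c₁ • a' + c₂ • b') :
    a = a' ∧ b = b' := by
  have hzero : c₁ • (a - a') = 0 :=
    Submodule.disjoint_def'.mp hPQ _ (P.smul_mem c₁ (P.sub_mem ha ha')) _
      (Q.smul_mem c₂ (Q.sub_mem hb' hb))
      (by rw [smul_sub, smul_sub]; linear_combination (norm := module) h)
  obtain rfl : a = a' := sub_eq_zero.mp ((smul_eq_zero.mp hzero).resolve_left hc₁)
  exact ⟨rfl, smul_right_injective V hc₂ (add_left_cancel h)⟩

section ColSpan

variable {n : ℕ} {σ τ : Type*}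

theorem colSpanQ_sumElim (A : σ → Fin n → ℕ) (B : τ → Fin n → ℕ) :
    colSpanQ (Sum.elim A B) = colSpanQ A ⊔ colSpanQ B := by
  rw [colSpanQ, colSpanQ, colSpanQ, ← Submodule.span_union, ← Set.Sum.elim_range]
  congr 2
  ext (j | j) <;> rfl

theorem disjoint_colSpanQ_of_rkQ_eq {A : σ → Fin n → ℕ} {B : τ → Fin n → ℕ}
    (h : rkQ (Sum.elim A B) = rkQ A + rkQ B) : Disjoint (colSpanQ A) (colSpanQ B) := by
  have hdim := Submodule.finrank_sup_add_finrank_inf_eq (colSpanQ A) (colSpanQ B)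
  rw [rkQ, rkQ, rkQ, colSpanQ_sumElim] at h
  rw [disjoint_iff, ← Submodule.finrank_eq_zero]
  omega

theorem natCast_linearCombination_mem_colSpanQ (A : σ → Fin n → ℕ) (m : σ →₀ ℕ) :
    (fun i => (linearCombination ℕ A m i : ℚ)) ∈ colSpanQ A := by
  have hcast := Finsupp.apply_linearCombination ℕ
    ((Nat.castAddMonoidHom ℚ).compLeft (Fin n)).toNatLinearMap A m
  refine (congrArg (· ∈ colSpanQ A) hcast).mpr (Submodule.span_le_restrictScalars ℕ ℚ _ ?_)
  rw [← Finsupp.range_linearCombination]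
  exact LinearMap.mem_range_self _ m

end ColSpan

section Glue

variable {k : Type*} [CommRing k] {n : ℕ} {σ τ : Type*}

theorem linearCombination_eq_of_disjoint_colSpanQ {A : σ → Fin n → ℕ} {B : τ → Fin n → ℕ}
    (hAB : Disjoint (colSpanQ A) (colSpanQ B)) {k1 k2 : ℕ} (hk1 : k1 ≠ 0) (hk2 : k2 ≠ 0)
    {mA mA' : σ →₀ ℕ} {mB mB' : τ →₀ ℕ}
    (h : k1 • linearCombination ℕ A mA + k2 • linearCombination ℕ B mB =
      k1 • linearCombination ℕ A mA' + k2 • linearCombination ℕ B mB') :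
    linearCombination ℕ A mA = linearCombination ℕ A mA' ∧
      linearCombination ℕ B mB = linearCombination ℕ B mB' := by
  have hQ := congrArg ((Nat.castAddMonoidHom ℚ).compLeft (Fin n)) h
  simp only [map_add, map_nsmul, ← Nat.cast_smul_eq_nsmul ℚ] at hQ
  obtain ⟨hA, hB⟩ := eq_and_eq_of_smul_add_smul_eq hAB (Nat.cast_ne_zero.mpr hk1)
    (Nat.cast_ne_zero.mpr hk2) (natCast_linearCombination_mem_colSpanQ A mA)
    (natCast_linearCombination_mem_colSpanQ A mA') (natCast_linearCombination_mem_colSpanQ B mB)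
    (natCast_linearCombination_mem_colSpanQ B mB') hQ
  exact ⟨Nat.cast_injective.comp_left hA, Nat.cast_injective.comp_left hB⟩

theorem linearCombination_glueList_sumElim (k1 k2 : ℕ) (A : σ → Fin n → ℕ)
    (B : τ → Fin n → ℕ) (mA : σ →₀ ℕ) (mB : τ →₀ ℕ) :
    linearCombination ℕ (glueList k1 k2 A B) (mA.sumElim mB) =
      k1 • linearCombination ℕ A mA + k2 • linearCombination ℕ B mB := by
  rw [Finsupp.sumElim_eq_add, map_add, Finsupp.linearCombination_mapDomain,
    Finsupp.linearCombination_mapDomain, ← linearCombination_nsmul, ← linearCombination_nsmul]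
  rfl

theorem monomial_sumElim_one (mA : σ →₀ ℕ) (mB : τ →₀ ℕ) :
    monomial (mA.sumElim mB) (1 : k) =
      rename Sum.inl (monomial mA 1) * rename Sum.inr (monomial mB 1) := by
  rw [Finsupp.sumElim_eq_add, rename_monomial, rename_monomial, monomial_mul, mul_one]

theorem binomial_sumElim_mem_extIdeal_add (A : σ → Fin n → ℕ) (B : τ → Fin n → ℕ)
    {mA mA' : σ →₀ ℕ} {mB mB' : τ →₀ ℕ}
    (hA : linearCombination ℕ A mA = linearCombination ℕ A mA')
    (hB : linearCombination ℕ B mB = linearCombination ℕ B mB') :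
    monomial (mA.sumElim mB) (1 : k) - monomial (mA'.sumElim mB') 1 ∈
      extIdealLeft k τ A + extIdealRight k σ B := by
  have hxA : _ ∈ extIdealLeft k τ A :=
    Ideal.mem_map_of_mem (rename Sum.inl) (binomial_mem_toricIdeal A hA)
  have hxB : _ ∈ extIdealRight k σ B :=
    Ideal.mem_map_of_mem (rename Sum.inr) (binomial_mem_toricIdeal B hB)
  rw [map_sub] at hxA hxB
  rw [monomial_sumElim_one, monomial_sumElim_one, Submodule.add_eq_sup]
  -- `x y - x' y' = y (x - x') + x' (y - y')`
  convert Submodule.add_mem_sup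
    (Ideal.mul_mem_left _ (rename Sum.inr (monomial mB (1 : k))) hxA)
    (Ideal.mul_mem_left _ (rename Sum.inl (monomial mA' (1 : k))) hxB) using 1
  ring

theorem toricIdeal_glueList_le {A : σ → Fin n → ℕ} {B : τ → Fin n → ℕ}
    (hAB : Disjoint (colSpanQ A) (colSpanQ B)) {k1 k2 : ℕ} (hk1 : k1 ≠ 0) (hk2 : k2 ≠ 0) :
    toricIdeal k (glueList k1 k2 A B) ≤ extIdealLeft k τ A + extIdealRight k σ B := by
  refine toricIdeal_le_of_binomial_mem _ fun m m' hm => ?_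
  obtain ⟨⟨mA, mB⟩, rfl⟩ := Finsupp.sumFinsuppEquivProdFinsupp.symm.surjective m
  obtain ⟨⟨mA', mB'⟩, rfl⟩ := Finsupp.sumFinsuppEquivProdFinsupp.symm.surjective m'
  simp only [Finsupp.sumFinsuppEquivProdFinsupp_symm_apply, linearCombination_glueList_sumElim]
    at hm ⊢
  obtain ⟨hA, hB⟩ := linearCombination_eq_of_disjoint_colSpanQ hAB hk1 hk2 hm
  exact binomial_sumElim_mem_extIdeal_add A B hA hB

theorem extIdeal_add_le_toricIdeal_glueList (A : σ → Fin n → ℕ) (B : τ → Fin n → ℕ)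
    (k1 k2 : ℕ) :
    extIdealLeft k τ A + extIdealRight k σ B ≤ toricIdeal k (glueList k1 k2 A B) :=
  sup_le (Ideal.map_le_iff_le_comap.mpr (toricIdeal_le_comap_rename Sum.inl k1 rfl))
    (Ideal.map_le_iff_le_comap.mpr (toricIdeal_le_comap_rename Sum.inr k2 rfl))

end Glue

theorem toricIdeal_splits_general (k : Type*) [Field k] {n p q : ℕ}
    (A : Fin p → Fin n → ℕ) (B : Fin q → Fin n → ℕ)
    (h : rkQ (Sum.elim A B) = rkQ A + rkQ B)
    (k1 k2 : ℕ) (hk1 : 0 < k1) (hk2 : 0 < k2) :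
    toricIdeal k (glueList k1 k2 A B) =
      extIdealLeft k (Fin q) A + extIdealRight k (Fin p) B :=
  le_antisymm (toricIdeal_glueList_le (disjoint_colSpanQ_of_rkQ_eq h) hk1.ne' hk2.ne')
    (extIdeal_add_le_toricIdeal_glueList A B k1 k2)

/-- If `rk (A|B) = rk A + rk B` (the `ℚ`-spans of the columns of `A` and
`B` meet only in `0`), then for all positive `k₁, k₂` the toric ideal of `C = k₁A ⊔ k₂B`
splits: `I_C = I_A·R + I_B·R`. -/
theorem toricIdeal_splits (k : Type*) [Field k] {n p q : ℕ} (hn : 1 ≤ n)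
    (A : Fin p → Fin n → ℕ) (B : Fin q → Fin n → ℕ)
    (h : rkQ (Sum.elim A B) = rkQ A + rkQ B)
    (k1 k2 : ℕ) (hk1 : 0 < k1) (hk2 : 0 < k2) :
    toricIdeal k (glueList k1 k2 A B) =
      extIdealLeft k (Fin q) A + extIdealRight k (Fin p) B :=
  toricIdeal_splits_general k A B h k1 k2 hk1 hk2
end
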